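/- arXiv:1010.4108 — 2 statements merged into one kernel-verified Lean document; each statement's English description precedes it below -/
import Mathlib

section
/- Let γ > 0, let S ⊆ V with μ(S) ≤ 1/8, let α ≥ (7/8)·γ, and let β : V → ℝ satisfy 0 ≤ β_i ≤ γ·μ_i for all i ∈ V and β_i = 0 for all i ∉ S. Suppose that for every x : V → ℝ, with x̄ = Σ_{i∈V} μ_i x_i, one has (1/m)·Σ_{{i,j}∈E} (x_i − x_j)² + Σ_{i∈V} β_i (x_i − x̄)² − α·Σ_{i∈V} μ_i (x_i − x̄)² ≥ 0. Then every nonempty C ⊊ V with μ(C) ≤ 1/2 and φ(C) ≤ γ/16 satisfies μ(S ∩ C) ≥ (1/2)·μ(C). -/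
open Finset

/-- Number of edges of `G` with exactly one endpoint in `S` (each such edge counted once). -/
def cutSize {n : ℕ} (G : SimpleGraph (Fin n)) [DecidableRel G.Adj] (S : Finset (Fin n)) : ℕ :=
  ∑ i ∈ S, ∑ j ∈ Sᶜ, if G.Adj i j then 1 else 0

/-- Volume of a vertex subset: the sum of the degrees of its vertices. -/
def vol {n : ℕ} (G : SimpleGraph (Fin n)) [DecidableRel G.Adj] (S : Finset (Fin n)) : ℕ :=
  ∑ i ∈ S, G.degree i

/-- Conductance `φ(S) = |E(S,S̄)| / min(vol(S), vol(S̄))`. -/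
noncomputable def conductance {n : ℕ} (G : SimpleGraph (Fin n)) [DecidableRel G.Adj]
    (S : Finset (Fin n)) : ℝ :=
  (cutSize G S : ℝ) / min (vol G S : ℝ) (vol G Sᶜ : ℝ)

/-- Sum of a symmetric function over the edges `{i,j} ∈ E` of `G` (each edge counted once). -/
noncomputable def edgeSum {n : ℕ} (G : SimpleGraph (Fin n)) [DecidableRel G.Adj]
    (f : Fin n → Fin n → ℝ) : ℝ :=
  (∑ i, ∑ j, if G.Adj i j then f i j else 0) / 2

/-- Total `μ`-measure of a vertex subset, where `μ_i = d_i/(2m)`. -/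
noncomputable def μvol {n : ℕ} (G : SimpleGraph (Fin n)) [DecidableRel G.Adj]
    (m : ℕ) (S : Finset (Fin n)) : ℝ :=
  ∑ i ∈ S, (G.degree i : ℝ) / (2 * m)

/-! Test the certificate on the indicator `x = 1_C`: its `μ`-mean is `t = μ(C)` and its
`μ`-variance is `t(1-t)`. The edge term of the quadratic form is `|E(C,C̄)|/m ≤ (γ/8)·t` by the
conductance bound, and, since `β ≤ γμ` vanishes off `S` and `μ(S) ≤ 1/8`, the `β`-term is at most
`γ·μ(S∩C)·(1-t)² + (γ/8)·t²`. With `α ≥ 7γ/8`, nonnegativity of the form gives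
`μ(S∩C)·(1-t)² ≥ t(3/4 - t)`, which is at least `(t/2)·(1-t)²` for `t ≤ 1/2`. -/

theorem sum_mul_indicator_sub_sq {ι : Type*} [Fintype ι] [DecidableEq ι]
    (w : ι → ℝ) (C : Finset ι) (t : ℝ) :
    ∑ i, w i * ((if i ∈ C then 1 else 0) - t) ^ 2 =
      (∑ i ∈ C, w i) * (1 - t) ^ 2 + (∑ i ∈ Cᶜ, w i) * t ^ 2 := by
  rw [← sum_add_sum_compl C, sum_mul, sum_mul]
  congr 1 <;> refine sum_congr rfl fun i hi => ?_ <;> simp_all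

theorem sum_le_sum_inter_of_eq_zero_of_notMem {ι : Type*} [DecidableEq ι] {S : Finset ι}
    {f g : ι → ℝ} (hf : ∀ i, i ∉ S → f i = 0) (hfg : ∀ i, f i ≤ g i) (T : Finset ι) :
    ∑ i ∈ T, f i ≤ ∑ i ∈ S ∩ T, g i := by
  rw [← sum_subset inter_subset_right fun i hiT hi => hf i fun hiS => hi (mem_inter.2 ⟨hiS, hiT⟩)]
  exact sum_le_sum fun i _ => hfg i

theorem half_le_of_quadratic_ineq {t s : ℝ} (ht0 : 0 ≤ t) (ht : t ≤ 1 / 2)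
    (h : 7 / 8 * (t * (1 - t)) ≤ t / 8 + s * (1 - t) ^ 2 + t ^ 2 / 8) :
    1 / 2 * t ≤ s := by
  have hs : 1 / 2 * t * (1 - t) ^ 2 ≤ s * (1 - t) ^ 2 := by
    nlinarith [mul_nonneg ht0 (by nlinarith : (0 : ℝ) ≤ 1 / 4 - t ^ 2 / 2)]
  exact le_of_mul_le_mul_right hs (by nlinarith)

section Graph

variable {n : ℕ} (G : SimpleGraph (Fin n)) [DecidableRel G.Adj]

theorem cutSize_compl (S : Finset (Fin n)) : cutSize G Sᶜ = cutSize G S := by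
  unfold cutSize
  rw [compl_compl, sum_comm]
  simp only [G.adj_comm]

theorem cutSize_le_vol (S : Finset (Fin n)) : cutSize G S ≤ vol G S := by
  refine sum_le_sum fun i _ => ?_
  calc ∑ j ∈ Sᶜ, (if G.Adj i j then 1 else 0)
      ≤ ∑ j, (if G.Adj i j then 1 else 0) := sum_le_sum_of_subset (subset_univ _)
    _ = G.degree i := by
      rw [sum_boole, ← G.card_neighborFinset_eq_degree, G.neighborFinset_eq_filter]
      simp

theorem edgeSum_indicator_sub_sq (C : Finset (Fin n)) :
    edgeSum G (fun i j => ((if i ∈ C then 1 else 0) - (if j ∈ C then 1 else 0)) ^ 2)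
      = cutSize G C := by
  have hrow : ∀ i, (∑ j, if G.Adj i j then
      ((if i ∈ C then 1 else 0) - (if j ∈ C then 1 else 0)) ^ 2 else 0 : ℝ) =
      if i ∈ C then ∑ j ∈ Cᶜ, (if G.Adj i j then 1 else 0)
      else ∑ j ∈ C, (if G.Adj i j then 1 else 0) := by
    intro i
    split_ifs <;>
    · refine (Fintype.sum_congr _ _ fun j => ?_).trans (sum_ite_mem_eq _ _)
      by_cases hj : j ∈ C <;> simp [hj]
  have hcut : ∀ S, (cutSize G S : ℝ) = ∑ i ∈ S, ∑ j ∈ Sᶜ, if G.Adj i j then 1 else 0 := by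
    intro S
    push_cast [cutSize]
    rfl
  have hcut_compl := hcut Cᶜ
  rw [compl_compl, cutSize_compl] at hcut_compl
  rw [edgeSum, ← sum_add_sum_compl C, sum_congr rfl fun i hi => (hrow i).trans (if_pos hi),
    sum_congr rfl fun i hi => (hrow i).trans (if_neg (mem_compl.1 hi)), ← hcut, ← hcut_compl]
  ring

theorem vol_add_vol_compl (S : Finset (Fin n)) : vol G S + vol G Sᶜ = 2 * #G.edgeFinset := by
  rw [vol, vol, sum_add_sum_compl, G.sum_degrees_eq_twice_card_edges]

theorem μvol_eq_vol_div (m : ℕ) (S : Finset (Fin n)) : μvol G m S = vol G S / (2 * m) := by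
  rw [μvol, vol, Nat.cast_sum, sum_div]

theorem μvol_nonneg (m : ℕ) (S : Finset (Fin n)) : 0 ≤ μvol G m S :=
  sum_nonneg fun _ _ => by positivity

theorem μvol_add_μvol_compl {m : ℕ} (hm : m = #G.edgeFinset) (hm0 : 0 < m)
    (S : Finset (Fin n)) : μvol G m S + μvol G m Sᶜ = 1 := by
  have hm0' : (2 * m : ℝ) ≠ 0 := by positivity
  rw [μvol_eq_vol_div, μvol_eq_vol_div, ← add_div, div_eq_one_iff_eq hm0', hm]
  exact_mod_cast vol_add_vol_compl G S

theorem vol_le_vol_compl_of_μvol_le_half {m : ℕ} (hm : m = #G.edgeFinset) (hm0 : 0 < m)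
    {S : Finset (Fin n)} (hS : μvol G m S ≤ 1 / 2) : vol G S ≤ vol G Sᶜ := by
  have htot : (vol G S : ℝ) + vol G Sᶜ = 2 * m := by
    rw [hm]
    exact_mod_cast vol_add_vol_compl G S
  rw [μvol_eq_vol_div, div_le_iff₀ (by positivity)] at hS
  exact_mod_cast (by linarith : (vol G S : ℝ) ≤ vol G Sᶜ)

/-- For `vol S = 0` the conductance is the junk value `0`, but then the cut is empty too. -/
theorem cutSize_le_mul_vol_of_conductance_le {S : Finset (Fin n)} {c : ℝ}
    (hS : conductance G S ≤ c) (hvol : vol G S ≤ vol G Sᶜ) :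
    (cutSize G S : ℝ) ≤ c * vol G S := by
  rcases (vol G S).eq_zero_or_pos with h0 | hpos
  · simpa [h0] using cutSize_le_vol G S
  · rwa [conductance, min_eq_left (by exact_mod_cast hvol),
      div_le_iff₀ (by exact_mod_cast hpos)] at hS

theorem one_div_mul_cutSize_le_of_conductance_le {m : ℕ} (hm : m = #G.edgeFinset) (hm0 : 0 < m)
    {S : Finset (Fin n)} (hS : μvol G m S ≤ 1 / 2) {c : ℝ} (hφ : conductance G S ≤ c) :
    1 / (m : ℝ) * cutSize G S ≤ 2 * c * μvol G m S := by
  have hcut := cutSize_le_mul_vol_of_conductance_le G hφ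
    (vol_le_vol_compl_of_μvol_le_half G hm hm0 hS)
  calc 1 / (m : ℝ) * cutSize G S ≤ 1 / m * (c * vol G S) := by gcongr
    _ = 2 * c * μvol G m S := by rw [μvol_eq_vol_div]; field_simp

end Graph

theorem dual_certificate_correlation_general {n : ℕ}
    (G : SimpleGraph (Fin n)) [DecidableRel G.Adj]
    (m : ℕ) (hm : m = G.edgeFinset.card) (hm1 : 1 ≤ m)
    (μ : Fin n → ℝ) (hμ : ∀ i, μ i = (G.degree i : ℝ) / (2 * m))
    (γ : ℝ) (hγ : 0 < γ)
    (S : Finset (Fin n)) (hS : μvol G m S ≤ 1 / 8)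
    (α : ℝ) (hα : (7 / 8) * γ ≤ α)
    (β : Fin n → ℝ)
    (hβγ : ∀ i, β i ≤ γ * μ i)
    (hβsupp : ∀ i, i ∉ S → β i = 0)
    (hdual : ∀ x : Fin n → ℝ,
      0 ≤ (1 / (m : ℝ)) * edgeSum G (fun i j => (x i - x j) ^ 2) +
        ∑ i, β i * (x i - ∑ j, μ j * x j) ^ 2 -
        α * ∑ i, μ i * (x i - ∑ j, μ j * x j) ^ 2) :
    ∀ C : Finset (Fin n), C.Nonempty → C ≠ Finset.univ →
      μvol G m C ≤ 1 / 2 → conductance G C ≤ γ / 16 →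
      (1 / 2) * μvol G m C ≤ μvol G m (S ∩ C) := by
  intro C _ _ hC hφ
  have hμvol : ∀ T, ∑ i ∈ T, μ i = μvol G m T := fun T => sum_congr rfl fun i _ => hμ i
  have hγμ : ∀ i, 0 ≤ γ * μ i := fun i => mul_nonneg hγ.le (by rw [hμ]; positivity)
  have hCc : μvol G m Cᶜ = 1 - μvol G m C := by linarith [μvol_add_μvol_compl G hm hm1 C]
  have hcut := one_div_mul_cutSize_le_of_conductance_le G hm hm1 hC hφ
  have hβC : ∑ i ∈ C, β i ≤ γ * μvol G m (S ∩ C) := by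
    simpa [← hμvol, mul_sum] using sum_le_sum_inter_of_eq_zero_of_notMem hβsupp hβγ C
  have hβCc : ∑ i ∈ Cᶜ, β i ≤ γ / 8 := calc
    ∑ i ∈ Cᶜ, β i ≤ ∑ i ∈ S ∩ Cᶜ, γ * μ i :=
      sum_le_sum_inter_of_eq_zero_of_notMem hβsupp hβγ Cᶜ
    _ ≤ ∑ i ∈ S, γ * μ i := sum_le_sum_of_subset_of_nonneg inter_subset_left fun i _ _ => hγμ i
    _ ≤ γ / 8 := by rw [← mul_sum, hμvol]; linarith [mul_le_mul_of_nonneg_left hS hγ.le]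
  have hcert := hdual fun i => if i ∈ C then 1 else 0
  simp only [mul_ite, mul_one, mul_zero, sum_ite_mem_eq, hμvol, edgeSum_indicator_sub_sq,
    sum_mul_indicator_sub_sq, hCc] at hcert
  set t := μvol G m C
  have ht0 : 0 ≤ t := μvol_nonneg G m C
  have hvar : 0 ≤ t * (1 - t) := mul_nonneg ht0 (by linarith)
  refine half_le_of_quadratic_ineq ht0 hC (le_of_mul_le_mul_left ?_ hγ)
  nlinarith [mul_le_mul_of_nonneg_right hβC (sq_nonneg (1 - t)),
    mul_le_mul_of_nonneg_right hβCc (sq_nonneg t), mul_le_mul_of_nonneg_right hα hvar]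

/-- **Key step in the proof of the Main Theorem (Theorem 1.2).** A feasible dual
certificate `M(α,β) ⪰ 0` (expressed as nonnegativity of the quadratic form
`(1/m)·∑_{{i,j}∈E}(x_i−x_j)² + ∑ β_i (x_i−x̄)² − α·∑ μ_i (x_i−x̄)² for all `x`)
with `α ≥ (7/8)γ` and `0 ≤ β ≤ γ·μ` supported on a set `S` with `μ(S) ≤ 1/8`
forces `S` to capture at least half of every cut `C` with `μ(C) ≤ 1/2` and
`φ(C) ≤ γ/16`. -/
theorem dual_certificate_correlation {n : ℕ}
    (G : SimpleGraph (Fin n)) [DecidableRel G.Adj]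
    (m : ℕ) (hm : m = G.edgeFinset.card) (hm1 : 1 ≤ m)
    (hdeg : ∀ i, 0 < G.degree i)
    (μ : Fin n → ℝ) (hμ : ∀ i, μ i = (G.degree i : ℝ) / (2 * m))
    (γ : ℝ) (hγ : 0 < γ)
    (S : Finset (Fin n)) (hS : μvol G m S ≤ 1 / 8)
    (α : ℝ) (hα : (7 / 8) * γ ≤ α)
    (β : Fin n → ℝ)
    (hβ0 : ∀ i, 0 ≤ β i) (hβγ : ∀ i, β i ≤ γ * μ i)
    (hβsupp : ∀ i, i ∉ S → β i = 0)
    (hdual : ∀ x : Fin n → ℝ,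
      0 ≤ (1 / (m : ℝ)) * edgeSum G (fun i j => (x i - x j) ^ 2) +
        ∑ i, β i * (x i - ∑ j, μ j * x j) ^ 2 -
        α * ∑ i, μ i * (x i - ∑ j, μ j * x j) ^ 2) :
    ∀ C : Finset (Fin n), C.Nonempty → C ≠ Finset.univ →
      μvol G m C ≤ 1 / 2 → conductance G C ≤ γ / 16 →
      (1 / 2) * μvol G m C ≤ μvol G m (S ∩ C) :=
  dual_certificate_correlation_general G m hm hm1 μ hμ γ hγ S hS α hα β hβγ hβsupp hdual
end

section
/- Let x : V → ℝ and define y : V → ℝ by y_i = sgn(x_i)·x_i². Then Σ_{{i,j}∈E} |y_i − y_j| ≤ √( 2 · (Σ_{{i,j}∈E} (x_i − x_j)²) · (Σ_{i∈V} d_i x_i²) ). -/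
open Finset

/-- The sign function of the paper: `sgn(t) = 1` if `t ≥ 0` and `−1` otherwise. -/
noncomputable def sgn (t : ℝ) : ℝ := if 0 ≤ t then 1 else -1

/-! Since `sgn(t)·t² = t|t|`, each edge term satisfies
`|y_i - y_j| ≤ |x_i - x_j| (|x_i| + |x_j|)`. Cauchy–Schwarz over the edges bounds the edge sum of
the right-hand side by `√(∑_E (x_i - x_j)² · ∑_E (|x_i| + |x_j|)²)`, and
`∑_E (|x_i| + |x_j|)² ≤ 2 ∑_E (x_i² + x_j²) = 2 ∑_i d_i x_i²` by the handshake identity. -/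

lemma sgn_mul_sq (t : ℝ) : sgn t * t ^ 2 = t * |t| := by
  unfold sgn
  split_ifs with ht
  · rw [abs_of_nonneg ht]; ring
  · rw [abs_of_neg (not_le.mp ht)]; ring

lemma abs_mul_abs_sub_mul_abs_le (a b : ℝ) :
    |(a * |a| - b * |b|)| ≤ |a - b| * (|a| + |b|) := by
  have hsplit : a * |a| - b * |b| = ((a - b) * (|a| + |b|) + (a + b) * (|a| - |b|)) / 2 := by
    ring
  have hcross : |(a + b) * (|a| - |b|)| ≤ |a - b| * (|a| + |b|) := by
    rw [abs_mul, mul_comm |a - b|]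
    exact mul_le_mul (abs_add_le a b) (abs_abs_sub_abs_le_abs_sub a b) (abs_nonneg _)
      (by positivity)
  have hdiag : |(a - b) * (|a| + |b|)| = |a - b| * (|a| + |b|) := by
    rw [abs_mul, abs_of_nonneg (by positivity : 0 ≤ |a| + |b|)]
  rw [hsplit, abs_div, abs_two]
  linarith [abs_add_le ((a - b) * (|a| + |b|)) ((a + b) * (|a| - |b|))]

section EdgeSum

variable {n : ℕ} (G : SimpleGraph (Fin n)) [DecidableRel G.Adj]

lemma edgeSum_mono {f g : Fin n → Fin n → ℝ} (h : ∀ i j, G.Adj i j → f i j ≤ g i j) :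
    edgeSum G f ≤ edgeSum G g := by
  unfold edgeSum
  gcongr with i _ j _
  split_ifs with hij
  · exact h i j hij
  · rfl

lemma edgeSum_nonneg {f : Fin n → Fin n → ℝ} (h : ∀ i j, G.Adj i j → 0 ≤ f i j) :
    0 ≤ edgeSum G f := by
  unfold edgeSum
  refine div_nonneg (sum_nonneg fun i _ => sum_nonneg fun j _ => ?_) zero_le_two
  split_ifs with hij
  exacts [h i j hij, le_rfl]

lemma edgeSum_eq_sum_prod (f : Fin n → Fin n → ℝ) :
    edgeSum G f = (∑ p : Fin n × Fin n, if G.Adj p.1 p.2 then f p.1 p.2 else 0) / 2 := by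
  rw [edgeSum, Fintype.sum_prod_type]

lemma sq_edgeSum_mul_le (f g : Fin n → Fin n → ℝ) :
    edgeSum G (fun i j => f i j * g i j) ^ 2 ≤
      edgeSum G (fun i j => f i j ^ 2) * edgeSum G (fun i j => g i j ^ 2) := by
  simp only [edgeSum_eq_sum_prod, div_pow, div_mul_div_comm, ← sq]
  gcongr ?_ / _
  refine sum_sq_le_sum_mul_sum_of_sq_le_mul _ ?_ ?_ ?_ <;> intro p _ <;> split_ifs
  all_goals first | positivity | simp [mul_pow]

lemma edgeSum_mul_le_sqrt (f g : Fin n → Fin n → ℝ) :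
    edgeSum G (fun i j => f i j * g i j) ≤
      √(edgeSum G (fun i j => f i j ^ 2) * edgeSum G (fun i j => g i j ^ 2)) :=
  (le_abs_self _).trans (Real.abs_le_sqrt (sq_edgeSum_mul_le G f g))

lemma edgeSum_add_eq_sum_degree_mul (u : Fin n → ℝ) :
    edgeSum G (fun i j => u i + u j) = ∑ i, (G.degree i : ℝ) * u i := by
  have hrow : ∀ i, (∑ j, if G.Adj i j then u i else 0) = (G.degree i : ℝ) * u i := by
    intro i
    rw [← sum_filter, sum_const, nsmul_eq_mul, ← G.card_neighborFinset_eq_degree,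
      G.neighborFinset_eq_filter]
  have hcol : (∑ i, ∑ j, if G.Adj i j then u j else 0) =
      ∑ i, ∑ j, if G.Adj i j then u i else 0 := by
    rw [sum_comm]
    simp only [G.adj_comm]
  have hsplit : ∀ i j, (if G.Adj i j then u i + u j else 0) =
      (if G.Adj i j then u i else 0) + (if G.Adj i j then u j else 0) := by
    intro i j
    split_ifs <;> simp
  simp only [edgeSum, hsplit, sum_add_distrib, hcol, hrow]
  ring

end EdgeSum

/-- **Cauchy–Schwarz bound in the proof of Theorem 2.3.** For `y_i = sgn(x_i)·x_i²`,
`∑_{{i,j}∈E} |y_i − y_j| ≤ √( 2 · (∑_{{i,j}∈E} (x_i − x_j)²) · (∑_i d_i x_i²) )`. -/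
theorem edge_sum_abs_sgn_sq_le {n : ℕ}
    (G : SimpleGraph (Fin n)) [DecidableRel G.Adj]
    (x : Fin n → ℝ) (y : Fin n → ℝ) (hy : ∀ i, y i = sgn (x i) * x i ^ 2) :
    edgeSum G (fun i j => |y i - y j|) ≤
      Real.sqrt (2 * edgeSum G (fun i j => (x i - x j) ^ 2) *
        ∑ i, (G.degree i : ℝ) * x i ^ 2) := by
  calc edgeSum G (fun i j => |y i - y j|)
      ≤ edgeSum G (fun i j => |x i - x j| * (|x i| + |x j|)) := edgeSum_mono G fun i j _ => by
        rw [hy i, hy j, sgn_mul_sq, sgn_mul_sq]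
        exact abs_mul_abs_sub_mul_abs_le (x i) (x j)
    _ ≤ √(edgeSum G (fun i j => |x i - x j| ^ 2) *
          edgeSum G (fun i j => (|x i| + |x j|) ^ 2)) :=
        edgeSum_mul_le_sqrt G _ _
    _ ≤ √(edgeSum G (fun i j => (x i - x j) ^ 2) *
          edgeSum G (fun i j => 2 * x i ^ 2 + 2 * x j ^ 2)) := by
        simp only [sq_abs]
        gcongr
        · exact edgeSum_nonneg G fun _ _ _ => sq_nonneg _
        refine edgeSum_mono G fun i j _ => ?_
        nlinarith [sq_abs (x i), sq_abs (x j), sq_nonneg (|x i| - |x j|)]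
    _ = √(2 * edgeSum G (fun i j => (x i - x j) ^ 2) * ∑ i, (G.degree i : ℝ) * x i ^ 2) := by
        rw [edgeSum_add_eq_sum_degree_mul, mul_sum, mul_sum]
        congr 2 with i
        ring
end
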